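/- Every finite quantum poset is a quantum cpo: if (𝒳,R) is a quantum poset where 𝒳 has finitely many atoms, then for every d ∈ ℕ and every increasing sequence of functions K₁ ⊑ K₂ ⊑ ⋯ : ℋ_d → 𝒳 (where K_n ⊑ K_{n+1} means K_{n+1} ≤ R∘K_n), there exists a function K_∞ : ℋ_d → 𝒳 with R∘K_∞ = ⋀_{n∈ℕ} R∘K_n. -/
import Mathlib


open Matrix

/-- A quantum relation between quantum sets: atom index types `ι`, `κ` with
dimension functions `a`, `b`; an entrywise choice of operator subspaces,
operators `L(X,Y)` represented as matrices. -/
abbrev QRel (ι κ : Type) (a : ι → ℕ) (b : κ → ℕ) : Type :=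
  ∀ (X : ι) (Y : κ), Submodule ℂ (Matrix (Fin (b Y)) (Fin (a X)) ℂ)

/-- Composition of quantum relations: entrywise span of products over
intermediate atoms. -/
noncomputable def qComp {ι κ μ : Type} {a : ι → ℕ} {b : κ → ℕ} {c : μ → ℕ}
    (S : QRel κ μ b c) (R : QRel ι κ a b) : QRel ι μ a c :=
  fun X Z => Submodule.span ℂ
    {t | ∃ (Y : κ) (r : Matrix (Fin (b Y)) (Fin (a X)) ℂ)
        (s : Matrix (Fin (c Z)) (Fin (b Y)) ℂ),
        r ∈ R X Y ∧ s ∈ S Y Z ∧ t = s * r}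

/-- Adjoint of a quantum relation: entrywise conjugate transpose. -/
noncomputable def qAdj {ι κ : Type} {a : ι → ℕ} {b : κ → ℕ} (R : QRel ι κ a b) : QRel κ ι b a :=
  fun Y X =>
  { carrier := {g | gᴴ ∈ R X Y}
    add_mem' := fun hx hy => by
      simpa [Matrix.conjTranspose_add] using (R X Y).add_mem hx hy
    zero_mem' := by simpa using (R X Y).zero_mem
    smul_mem' := fun c x hx => by
      simpa [Matrix.conjTranspose_smul] using (R X Y).smul_mem (star c) hx }

/-- The identity quantum relation: `ℂ·1` on the diagonal, `0` elsewhere. -/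
noncomputable def qId (ι : Type) (a : ι → ℕ) : QRel ι ι a a :=
  fun X X' => Submodule.span ℂ
    {m | X = X' ∧ ∀ i j, m i j = if (i : ℕ) = (j : ℕ) then 1 else 0}

/-- A quantum relation is a function when `F∘F† ≤ I` and `F†∘F ≥ I`. -/
def qIsFunc {ι κ : Type} {a : ι → ℕ} {b : κ → ℕ} (F : QRel ι κ a b) : Prop :=
  qComp F (qAdj F) ≤ qId κ b ∧ qId ι a ≤ qComp (qAdj F) F

/-- A quantum partial order: reflexive, transitive, antisymmetric. -/
def qIsOrder {ι : Type} {a : ι → ℕ} (R : QRel ι ι a a) : Prop :=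
  qId ι a ≤ R ∧ qComp R R ≤ R ∧ R ⊓ qAdj R ≤ qId ι a

/-- The order on functions into a quantum poset `(𝒳,R)`: `F ⊑ G` iff `G ≤ R∘F`. -/
def qFunLE {ι κ : Type} {a : ι → ℕ} {b : κ → ℕ} (R : QRel κ κ b b)
    (F G : QRel ι κ a b) : Prop :=
  G ≤ qComp R F

/-- `qComp` is monotone in both arguments. -/
lemma qComp_mono {ι κ μ : Type} {a : ι → ℕ} {b : κ → ℕ} {c : μ → ℕ}
    {S S' : QRel κ μ b c} {R R' : QRel ι κ a b} (hS : S ≤ S') (hRle : R ≤ R') :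
    qComp S R ≤ qComp S' R' := by
  intro X Z
  apply Submodule.span_mono
  rintro t ⟨Y, r, s, hr, hs, rfl⟩
  exact ⟨Y, r, s, hRle X Y hr, hS Y Z hs, rfl⟩

/-- One direction of associativity of `qComp`, enough for our purposes. -/
lemma qComp_assoc_le {ι κ μ ν : Type} {a : ι → ℕ} {b : κ → ℕ} {c : μ → ℕ} {e : ν → ℕ}
    (S : QRel μ ν c e) (R : QRel κ μ b c) (Q : QRel ι κ a b) :
    qComp S (qComp R Q) ≤ qComp (qComp S R) Q := by
  intro X Z
  apply Submodule.span_le.2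
  rintro t ⟨Y, r, s, hr, hs, rfl⟩
  induction hr using Submodule.span_induction with
  | mem x hx =>
      obtain ⟨W, q, r', hq, hr', rfl⟩ := hx
      rw [← Matrix.mul_assoc]
      exact Submodule.subset_span ⟨W, q, s * r', hq,
        Submodule.subset_span ⟨Y, r', s, hr', hs, rfl⟩, rfl⟩
  | zero => simp only [Matrix.mul_zero]; exact Submodule.zero_mem _
  | add x y _ _ hx hy => rw [Matrix.mul_add]; exact Submodule.add_mem _ hx hy
  | smul c x _ hx => rw [Matrix.mul_smul]; exact Submodule.smul_mem _ c hx

/-- Every finite quantum poset is a quantum cpo: every increasing sequence of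
functions `ℋ_d → 𝒳` has a limit. -/
theorem finite_quantum_poset_is_cpo {ι : Type} [Fintype ι] {a : ι → ℕ}
    (R : QRel ι ι a a) (hR : qIsOrder R) (d : ℕ)
    (K : ℕ → QRel PUnit ι (fun _ => d) a)
    (hfunc : ∀ n, qIsFunc (K n))
    (hchain : ∀ n, qFunLE R (K n) (K (n + 1))) :
    ∃ Kinf : QRel PUnit ι (fun _ => d) a, qIsFunc Kinf ∧
      qComp R Kinf = ⨅ n, qComp R (K n) := by
  set D : ℕ → QRel PUnit ι (fun _ => d) a := fun n => qComp R (K n) with hD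
  have hA : Antitone D := by
    apply antitone_nat_of_succ_le
    intro n
    calc D (n+1) ≤ qComp R (qComp R (K n)) := qComp_mono le_rfl (hchain n)
      _ ≤ qComp (qComp R R) (K n) := qComp_assoc_le R R (K n)
      _ ≤ D n := qComp_mono hR.2.1 le_rfl
  set g : ℕ → ℕ := fun n => ∑ Y : ι, Module.finrank ℂ (D n PUnit.unit Y) with hg
  have hne : (Set.range g).Nonempty := ⟨g 0, 0, rfl⟩
  obtain ⟨N, hNg⟩ := Nat.sInf_mem hne
  have hmin : ∀ m, g N ≤ g m := fun m => hNg ▸ Nat.sInf_le ⟨m, rfl⟩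
  have hstab : ∀ n, N ≤ n → D n = D N := by
    intro n hn
    have hle : D n ≤ D N := hA hn
    have hterm : ∀ Y : ι, Module.finrank ℂ (D n PUnit.unit Y)
        ≤ Module.finrank ℂ (D N PUnit.unit Y) :=
      fun Y => Submodule.finrank_mono (hle PUnit.unit Y)
    have hsum : g n = g N :=
      le_antisymm (Finset.sum_le_sum (fun Y _ => hterm Y)) (hmin n)
    have heq : ∀ Y ∈ Finset.univ, Module.finrank ℂ (D n PUnit.unit Y)
        = Module.finrank ℂ (D N PUnit.unit Y) :=
      (Finset.sum_eq_sum_iff_of_le (fun Y _ => hterm Y)).1 hsum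
    funext X Y
    cases X
    exact Submodule.eq_of_le_of_finrank_le (hle PUnit.unit Y)
      (le_of_eq (heq Y (Finset.mem_univ Y)).symm)
  refine ⟨K N, hfunc N, le_antisymm (le_iInf fun n => ?_) (iInf_le _ N)⟩
  rcases le_total n N with h | h
  · exact hA h
  · exact le_of_eq (hstab n h).symm
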